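/- arXiv:1501.01836 — 2 statements merged into one kernel-verified Lean document; each statement's English description precedes it below -/
import Mathlib

section
/- Let E be a finite-dimensional real inner product space, M a real inner product space of finite dimension m ≥ 1, and π : E →ₗ[ℝ] M a surjective linear map with kernel F such that ⟪π x, π y⟫ = ⟪x, y⟫ for all x, y in the orthogonal complement Fᗮ. Let ω be an alternating m-form on M with ω b = 1 for some orthonormal basis b of M. Then for every m-tuple v : Fin m → E with det (G v) = 1 and (π*ω) v = 1, one has v i ∈ Fᗮ for every i; that is, the unit simple m-vectors on which π*ω attains the value 1 are exactly the horizontal ones. -/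
open Matrix

/-- The Gram matrix of an `m`-tuple of vectors in a real inner product space. -/
noncomputable def gramIP {E : Type*} [NormedAddCommGroup E] [InnerProductSpace ℝ E]
    (m : ℕ) (v : Fin m → E) : Matrix (Fin m) (Fin m) ℝ :=
  Matrix.of fun i j => (inner ℝ (v i) (v j) : ℝ)

/-!
Split `v = p + q` with `p` in `ker π` and `q` horizontal. Since `π` is isometric on horizontal
vectors, `G(q) = G(π ∘ v)`, and `det G(π ∘ v) = ω(π ∘ v)² = 1` because `ω b = 1` makes `ω` the
volume form of `b`. Thus `G(v) = G(p) + G(q)` with both summands positive semidefinite and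
`det G(v) = det G(q) ≠ 0`. Writing `G(q) = C*C` and conjugating by `C⁻¹` reduces this to
`det (1 + N) = 1` with `N ≥ 0`; as `det (1 + N)` is the product of the `1 + λ` over the
eigenvalues `λ ≥ 0` of `N`, all of them vanish. Hence `G(p) = 0`, i.e. `p = 0`.
-/

open scoped ComplexOrder

namespace Matrix
variable {n 𝕜 : Type*} [RCLike 𝕜]

section Determinant
variable [Fintype n] [DecidableEq n]

lemma PosSemidef.eq_zero_of_det_one_add_eq_one {N : Matrix n n 𝕜} (hN : N.PosSemidef)
    (h : (1 + N).det = 1) : N = 0 := by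
  have hev := hN.eigenvalues_nonneg
  have hdet : (1 + N).det = ∏ i, ((1 + hN.1.eigenvalues i : ℝ) : 𝕜) := by
    conv_lhs => rw [hN.1.spectral_theorem,
      ← map_one (Unitary.conjStarAlgAut 𝕜 _ hN.1.eigenvectorUnitary), ← map_add]
    rw [Unitary.conjStarAlgAut_apply, det_mul_right_comm,
      Unitary.mul_star_self_of_mem hN.1.eigenvectorUnitary.2, one_mul]
    simp [← diagonal_one, diagonal_add, det_diagonal, RCLike.ofReal_add]
  have hprod : ∏ i, (1 + hN.1.eigenvalues i) = 1 := by exact_mod_cast hdet ▸ h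
  rw [← hN.1.eigenvalues_eq_zero_iff]
  funext i
  have hle : 1 + hN.1.eigenvalues i ≤ ∏ j, (1 + hN.1.eigenvalues j) := by
    simpa using Finset.prod_le_prod_of_subset_of_one_le (f := fun j => 1 + hN.1.eigenvalues j)
      (Finset.singleton_subset_iff.2 (Finset.mem_univ i))
      (fun j _ => by linarith [hev j]) (fun j _ _ => by linarith [hev j])
  rw [Pi.zero_apply]
  linarith [hev i]

open scoped MatrixOrder in
lemma PosSemidef.eq_zero_of_det_add_eq_det {A B : Matrix n n 𝕜} (hA : A.PosSemidef)
    (hB : B.PosDef) (h : (A + B).det = B.det) : A = 0 := by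
  obtain ⟨C, rfl⟩ := CStarAlgebra.nonneg_iff_eq_star_mul_self.mp hB.posSemidef.nonneg
  have hC : IsUnit C.det := by
    have := (isUnit_iff_isUnit_det _).mp hB.isUnit
    rw [det_mul] at this
    exact isUnit_of_mul_isUnit_right this
  set D := C⁻¹
  have hCD : C * D = 1 := mul_nonsing_inv C hC
  have hDC : D * C = 1 := nonsing_inv_mul C hC
  have hB1 : Dᴴ * (star C * C) * D = 1 := by
    rw [star_eq_conjTranspose, show Dᴴ * (Cᴴ * C) * D = (C * D)ᴴ * (C * D) by
      simp [conjTranspose_mul, Matrix.mul_assoc], hCD, conjTranspose_one, one_mul]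
  have hN : Dᴴ * A * D = 0 := by
    refine (hA.conjTranspose_mul_mul_same D).eq_zero_of_det_one_add_eq_one ?_
    calc (1 + Dᴴ * A * D).det = (Dᴴ * (A + star C * C) * D).det := by
          rw [Matrix.mul_add, Matrix.add_mul, hB1, add_comm]
      _ = (Dᴴ * (star C * C) * D).det := by simp only [det_mul, h]
      _ = 1 := by rw [hB1, det_one]
  calc A = (D * C)ᴴ * A * (D * C) := by rw [hDC, conjTranspose_one, one_mul, mul_one]
    _ = Cᴴ * (Dᴴ * A * D) * C := by simp only [conjTranspose_mul, Matrix.mul_assoc]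
    _ = 0 := by rw [hN, Matrix.mul_zero, Matrix.zero_mul]

end Determinant

variable {E : Type*} [NormedAddCommGroup E] [InnerProductSpace 𝕜 E]

lemma gram_add_of_inner_eq_zero {p q : n → E} (h : ∀ i j, inner 𝕜 (p i) (q j) = 0) :
    gram 𝕜 (p + q) = gram 𝕜 p + gram 𝕜 q := by
  ext i j
  simp [inner_add_left, inner_add_right, h, inner_eq_zero_symm.mp (h j i)]

lemma gram_eq_zero_iff {v : n → E} : gram 𝕜 v = 0 ↔ v = 0 := by
  refine ⟨fun h => funext fun i => (inner_self_eq_zero (𝕜 := 𝕜)).mp ?_, fun h => h ▸ gram_zero⟩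
  simpa using congrFun (congrFun h i) i

lemma eq_zero_of_det_gram_add_eq [Fintype n] [DecidableEq n] {p q : n → E}
    (horth : ∀ i j, inner 𝕜 (p i) (q j) = 0)
    (hq : (gram 𝕜 q).det ≠ 0) (h : (gram 𝕜 (p + q)).det = (gram 𝕜 q).det) : p = 0 := by
  rw [gram_add_of_inner_eq_zero horth] at h
  exact gram_eq_zero_iff.mp <| (posSemidef_gram 𝕜 p).eq_zero_of_det_add_eq_det
    ((posSemidef_gram 𝕜 q).posDef_iff_det_ne_zero.mpr hq) h

end Matrix

lemma OrthonormalBasis.det_gram_eq_sq {ι M : Type*} [Fintype ι] [DecidableEq ι]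
    [NormedAddCommGroup M] [InnerProductSpace ℝ M] (b : OrthonormalBasis ι ℝ M) (w : ι → M) :
    (gram ℝ w).det = b.toBasis.det w ^ 2 := by
  rw [gram_eq_conjTranspose_mul b, det_mul, det_conjTranspose, Module.Basis.det_apply, sq]
  rfl

lemma Submodule.mem_orthogonal_of_det_gram_sub_starProjection {𝕜 E n : Type*} [RCLike 𝕜]
    [NormedAddCommGroup E] [InnerProductSpace 𝕜 E] [Fintype n] [DecidableEq n]
    (K : Submodule 𝕜 E) [K.HasOrthogonalProjection] {v : n → E}
    (hv : (gram 𝕜 v).det ≠ 0)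
    (h : (gram 𝕜 fun i => v i - K.starProjection (v i)).det = (gram 𝕜 v).det) (i : n) :
    v i ∈ Kᗮ := by
  set q := fun i => v i - K.starProjection (v i)
  have hq : ∀ i, q i ∈ Kᗮ := fun i => K.sub_starProjection_mem_orthogonal (v i)
  have hp : (fun i => K.starProjection (v i)) = 0 := by
    refine eq_zero_of_det_gram_add_eq (q := q) (fun i j => ?_) (h ▸ hv) ?_
    · exact Submodule.inner_right_of_mem_orthogonal (K.starProjection_apply_mem _) (hq j)
    · rw [show (fun i => K.starProjection (v i)) + q = v from funext fun i => add_sub_cancel _ _, h]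
  simpa [q, congrFun hp i] using hq i

lemma gramIP_eq_gram {E : Type*} [NormedAddCommGroup E] [InnerProductSpace ℝ E] (m : ℕ)
    (v : Fin m → E) : gramIP m v = gram ℝ v :=
  rfl

theorem pullback_eq_one_horizontal_general {E M : Type*}
    [NormedAddCommGroup E] [InnerProductSpace ℝ E] [FiniteDimensional ℝ E]
    [NormedAddCommGroup M] [InnerProductSpace ℝ M]
    (m : ℕ)
    (π : E →ₗ[ℝ] M)
    (hiso : ∀ x ∈ (LinearMap.ker π)ᗮ, ∀ y ∈ (LinearMap.ker π)ᗮ,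
      (inner ℝ (π x) (π y) : ℝ) = (inner ℝ x y : ℝ))
    (ω : M [⋀^Fin m]→ₗ[ℝ] ℝ)
    (b : OrthonormalBasis (Fin m) ℝ M) (hω : ω ⇑b = 1) :
    ∀ v : Fin m → E, (gramIP m v).det = 1 → (ω.compLinearMap π) v = 1 →
      ∀ i, v i ∈ (LinearMap.ker π)ᗮ := by
  intro v hdet hval
  set K := LinearMap.ker π
  set q := fun i => v i - K.starProjection (v i)
  have hq : ∀ i, q i ∈ Kᗮ := fun i => K.sub_starProjection_mem_orthogonal (v i)
  have hπq : π ∘ q = π ∘ v := funext fun i => by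
    simp [q, LinearMap.mem_ker.mp (K.starProjection_apply_mem (v i))]
  have hgram : gram ℝ (π ∘ q) = gram ℝ q := Matrix.ext fun i j => hiso _ (hq i) _ (hq j)
  have hvol : ω (π ∘ v) = b.toBasis.det (π ∘ v) := by
    rw [ω.eq_smul_basis_det b.toBasis]
    simp [hω]
  rw [gramIP_eq_gram] at hdet
  refine K.mem_orthogonal_of_det_gram_sub_starProjection (by simp [hdet]) ?_
  rw [hdet, ← hgram, hπq, b.det_gram_eq_sq, ← hvol]
  exact (congrArg (· ^ 2) hval).trans (one_pow 2)

/-- The unit simple `m`-vectors on which the pullback form attains the value one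
are exactly the horizontal ones. -/
theorem pullback_eq_one_horizontal {E M : Type*}
    [NormedAddCommGroup E] [InnerProductSpace ℝ E] [FiniteDimensional ℝ E]
    [NormedAddCommGroup M] [InnerProductSpace ℝ M] [FiniteDimensional ℝ M]
    (m : ℕ) (hm : 1 ≤ m) (hM : Module.finrank ℝ M = m)
    (π : E →ₗ[ℝ] M) (hsurj : Function.Surjective π)
    (hiso : ∀ x ∈ (LinearMap.ker π)ᗮ, ∀ y ∈ (LinearMap.ker π)ᗮ,
      (inner ℝ (π x) (π y) : ℝ) = (inner ℝ x y : ℝ))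
    (ω : M [⋀^Fin m]→ₗ[ℝ] ℝ)
    (b : OrthonormalBasis (Fin m) ℝ M) (hω : ω ⇑b = 1) :
    ∀ v : Fin m → E, (gramIP m v).det = 1 → (ω.compLinearMap π) v = 1 →
      ∀ i, v i ∈ (LinearMap.ker π)ᗮ :=
  pullback_eq_one_horizontal_general m π hiso ω b hω
end

section
/- Let g be an inner product on V and let φ be a nonzero alternating m-form on V. Then the set { Real.sqrt (det (G_g v)) | v : Fin m → V with φ v = 1 } is nonempty and comass g φ = (sInf { Real.sqrt (det (G_g v)) | v : Fin m → V with φ v = 1 })⁻¹. -/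
open Matrix

/-- The Gram matrix of an `m`-tuple of vectors with respect to a bilinear form `g`. -/
noncomputable def gramMat {V : Type*} [AddCommGroup V] [Module ℝ V] (m : ℕ)
    (g : LinearMap.BilinForm ℝ V) (v : Fin m → V) : Matrix (Fin m) (Fin m) ℝ :=
  Matrix.of fun i j => g (v i) (v j)

/-- The comass of an alternating `m`-form `φ` with respect to a bilinear form `g`. -/
noncomputable def comass {V : Type*} [AddCommGroup V] [Module ℝ V] (m : ℕ)
    (g : LinearMap.BilinForm ℝ V) (φ : V [⋀^Fin m]→ₗ[ℝ] ℝ) : ℝ :=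
  sSup {x : ℝ | ∃ v : Fin m → V, (gramMat m g v).det ≠ 0 ∧
    x = φ v / Real.sqrt (gramMat m g v).det}

/-!
Tuples `v` with `φ v ≤ 0` only contribute nonpositive ratios to the comass. If `φ v > 0`,
rescaling one vector of `v` by `(φ v)⁻¹` gives a tuple on which `φ` is `1` and whose Gram
determinant has square root `√(det G v) / φ v`. So the positive ratios are exactly the reciprocals
of the elements of `S = {√(det G v) | φ v = 1}`, and `sSup S⁻¹ = (sInf S)⁻¹` because `S` consists
of positive reals: `φ` vanishes on dependent tuples, and the Gram matrix of an independent tuple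
is positive definite.
-/

/- If `sInf S = 0`, then `S⁻¹` is unbounded above and both sides are `0` by the junk conventions
for `sSup` and `0⁻¹`. -/
theorem Real.sSup_inv_eq_inv_sInf {S : Set ℝ} (hS : ∀ s ∈ S, 0 < s) :
    sSup S⁻¹ = (sInf S)⁻¹ := by
  rcases S.eq_empty_or_nonempty with rfl | ⟨s₀, hs₀⟩
  · simp
  have hbdd : BddBelow S := ⟨0, fun s hs => (hS s hs).le⟩
  have inv_sInf_mem_upperBounds (ht : 0 < sInf S) : (sInf S)⁻¹ ∈ upperBounds S⁻¹ :=
    fun y hy => le_inv_of_le_inv₀ ht (csInf_le hbdd (Set.mem_inv.1 hy))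
  have inv_le_sInf_of_mem_upperBounds {M : ℝ} (hM : M ∈ upperBounds S⁻¹) :
      0 < M ∧ M⁻¹ ≤ sInf S := by
    have hM₀ : 0 < M := (inv_pos.2 (hS s₀ hs₀)).trans_le (hM (Set.inv_mem_inv.2 hs₀))
    exact ⟨hM₀, le_csInf ⟨s₀, hs₀⟩ fun s hs =>
      inv_le_of_inv_le₀ (hS s hs) (hM (Set.inv_mem_inv.2 hs))⟩
  by_cases hA : BddAbove S⁻¹
  · obtain ⟨M, hM⟩ := hA
    obtain ⟨hM₀, hMS⟩ := inv_le_sInf_of_mem_upperBounds hM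
    have ht : 0 < sInf S := (inv_pos.2 hM₀).trans_le hMS
    refine IsLUB.csSup_eq ⟨inv_sInf_mem_upperBounds ht, fun M hM => ?_⟩
      ⟨s₀⁻¹, Set.inv_mem_inv.2 hs₀⟩
    obtain ⟨hM₀, hMS⟩ := inv_le_sInf_of_mem_upperBounds hM
    exact inv_le_of_inv_le₀ hM₀ hMS
  · have ht : sInf S = 0 := by
      refine le_antisymm (not_lt.1 fun ht => hA ⟨_, inv_sInf_mem_upperBounds ht⟩) ?_
      exact Real.sInf_nonneg fun s hs => (hS s hs).le
    rw [Real.sSup_of_not_bddAbove hA, ht, _root_.inv_zero]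

section Gram

variable {V : Type*} [AddCommGroup V] [Module ℝ V] {m : ℕ} {g : LinearMap.BilinForm ℝ V}

theorem dotProduct_gramMat_mulVec (v : Fin m → V) (x y : Fin m → ℝ) :
    x ⬝ᵥ (gramMat m g v *ᵥ y) = g (∑ i, x i • v i) (∑ j, y j • v j) := by
  simp only [dotProduct, mulVec, gramMat, of_apply, mul_comm, Finset.mul_sum, map_sum, map_smul,
    LinearMap.coe_sum, LinearMap.coe_smul, Finset.sum_apply, Pi.smul_apply, smul_eq_mul,
    mul_left_comm]
  exact Finset.sum_comm

theorem gramMat_posDef (hsymm : g.IsSymm) (hpos : ∀ v : V, v ≠ 0 → 0 < g v v)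
    {v : Fin m → V} (hv : LinearIndependent ℝ v) : (gramMat m g v).PosDef := by
  refine .of_dotProduct_mulVec_pos ?_ fun x hx => ?_
  · ext i j
    simpa [gramMat] using hsymm.eq (v j) (v i)
  · rw [star_trivial, dotProduct_gramMat_mulVec]
    refine hpos _ fun h => hx ?_
    exact funext (Fintype.linearIndependent_iff.1 hv x h)

theorem gramMat_smul (d : Fin m → ℝ) (v : Fin m → V) :
    gramMat m g (d • v) = diagonal d * gramMat m g v * diagonal d := by
  ext i j
  simp [gramMat, mul_comm, mul_left_comm]

theorem det_gramMat_smul (d : Fin m → ℝ) (v : Fin m → V) :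
    (gramMat m g (d • v)).det = (∏ i, d i) ^ 2 * (gramMat m g v).det := by
  rw [gramMat_smul, det_mul, det_mul, det_diagonal]
  ring

end Gram

section Comass

variable {V : Type*} [AddCommGroup V] [Module ℝ V] {m : ℕ} {g : LinearMap.BilinForm ℝ V}
  (φ : V [⋀^Fin m]→ₗ[ℝ] ℝ)

theorem det_gramMat_pos_of_apply_ne_zero (hsymm : g.IsSymm)
    (hpos : ∀ v : V, v ≠ 0 → 0 < g v v) {v : Fin m → V} (hv : φ v ≠ 0) :
    0 < (gramMat m g v).det :=
  (gramMat_posDef hsymm hpos (not_imp_comm.1 (φ.map_linearDependent v) hv)).det_pos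

variable (g) in
theorem exists_apply_eq_one_sqrt_det_gramMat_eq (i : Fin m) {v : Fin m → V} (hv : φ v ≠ 0) :
    ∃ w, φ w = 1 ∧ √(gramMat m g w).det = √(gramMat m g v).det / |φ v| := by
  classical
  refine ⟨Pi.mulSingle (M := fun _ => ℝ) i (φ v)⁻¹ • v, ?_, ?_⟩
  · refine (φ.map_smul_univ _ v).trans ?_
    simp [Finset.prod_pi_mulSingle', hv]
  · rw [det_gramMat_smul]
    simp only [Finset.prod_pi_mulSingle', Finset.mem_univ, if_true]
    rw [Real.sqrt_mul (sq_nonneg _), Real.sqrt_sq_eq_abs, abs_inv, inv_mul_eq_div]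

end Comass

theorem comass_eq_inv_sInf_general {V : Type*} [AddCommGroup V] [Module ℝ V]
    (m : ℕ) (hm : 1 ≤ m)
    (g : LinearMap.BilinForm ℝ V) (hsymm : g.IsSymm)
    (hpos : ∀ v : V, v ≠ 0 → 0 < g v v)
    (φ : V [⋀^Fin m]→ₗ[ℝ] ℝ) (hφ : φ ≠ 0) :
    {x : ℝ | ∃ v : Fin m → V, φ v = 1 ∧
        x = Real.sqrt (gramMat m g v).det}.Nonempty ∧
      comass m g φ =
        (sInf {x : ℝ | ∃ v : Fin m → V, φ v = 1 ∧
          x = Real.sqrt (gramMat m g v).det})⁻¹ := by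
  have i : Fin m := ⟨0, hm⟩
  have det_pos {v : Fin m → V} (hv : φ v = 1) : 0 < (gramMat m g v).det :=
    det_gramMat_pos_of_apply_ne_zero φ hsymm hpos (hv ▸ one_ne_zero)
  obtain ⟨v₀, hv₀⟩ : ∃ v, φ v ≠ 0 := DFunLike.ne_iff.1 hφ
  obtain ⟨w₀, hw₀, -⟩ := exists_apply_eq_one_sqrt_det_gramMat_eq g φ i hv₀
  refine ⟨⟨_, w₀, hw₀, rfl⟩, ?_⟩
  have hS_pos :
      ∀ s ∈ {x : ℝ | ∃ v : Fin m → V, φ v = 1 ∧ x = √(gramMat m g v).det}, 0 < s := by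
    rintro _ ⟨v, hv, rfl⟩
    exact Real.sqrt_pos.2 (det_pos hv)
  rw [comass, ← Real.sSup_inv_eq_inv_sInf hS_pos]
  apply csSup_eq_csSup_of_forall_exists_le
  · rintro _ ⟨v, -, rfl⟩
    rcases le_or_gt (φ v) 0 with hv | hv
    · refine ⟨_, Set.inv_mem_inv.2 ⟨w₀, hw₀, rfl⟩, ?_⟩
      exact (div_nonpos_of_nonpos_of_nonneg hv (Real.sqrt_nonneg _)).trans
        (inv_nonneg.2 (Real.sqrt_nonneg _))
    · obtain ⟨w, hw, hwv⟩ := exists_apply_eq_one_sqrt_det_gramMat_eq g φ i hv.ne'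
      refine ⟨_, Set.mem_inv.2 ⟨w, hw, ?_⟩, le_rfl⟩
      rw [hwv, abs_of_pos hv, inv_div]
  · intro y hy
    obtain ⟨v, hv, hyv⟩ := Set.mem_inv.1 hy
    refine ⟨y, ⟨v, (det_pos hv).ne', ?_⟩, le_rfl⟩
    rw [hv, ← hyv, one_div, inv_inv]

/-- Characterization of comass: `‖φ‖* = 1 / min { ‖W‖ : W simple with φ(W) = 1 }`. -/
theorem comass_eq_inv_sInf {V : Type*} [AddCommGroup V] [Module ℝ V]
    [FiniteDimensional ℝ V] (m : ℕ) (hm : 1 ≤ m) (hm' : m ≤ Module.finrank ℝ V)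
    (g : LinearMap.BilinForm ℝ V) (hsymm : g.IsSymm)
    (hpos : ∀ v : V, v ≠ 0 → 0 < g v v)
    (φ : V [⋀^Fin m]→ₗ[ℝ] ℝ) (hφ : φ ≠ 0) :
    {x : ℝ | ∃ v : Fin m → V, φ v = 1 ∧
        x = Real.sqrt (gramMat m g v).det}.Nonempty ∧
      comass m g φ =
        (sInf {x : ℝ | ∃ v : Fin m → V, φ v = 1 ∧
          x = Real.sqrt (gramMat m g v).det})⁻¹ :=
  comass_eq_inv_sInf_general m hm g hsymm hpos φ hφ
end
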